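/- Let G be a connected graph of order n whose blocks are all minimally 2-connected triangle-free graphs. Then mvd(G) = n − 2 if and only if G is a unicyclic graph whose unique cycle is C_4. -/

import Mathlib

open SimpleGraph

variable {V : Type*}

/-- There is an `x`–`y` walk all of whose vertices lie in `S`. -/
def ReachableWithin (G : SimpleGraph V) (S : Set V) (x y : V) : Prop :=
  ∃ p : G.Walk x y, ∀ v ∈ p.support, v ∈ S

/-- The vertex set `S` induces a (nonempty) connected subgraph of `G`. -/
def ConnectedOn (G : SimpleGraph V) (S : Set V) : Prop :=
  S.Nonempty ∧ ∀ x ∈ S, ∀ y ∈ S, ReachableWithin G S x y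

/-- `S` is a vertex cut of `G` separating `x` from `y`. -/
def IsCutBetween (G : SimpleGraph V) (x y : V) (S : Set V) : Prop :=
  x ∉ S ∧ y ∉ S ∧ ∀ p : G.Walk x y, ∃ v ∈ p.support, v ∈ S

/-- All vertices of `S` receive the same color under `τ`. -/
def Monochromatic (τ : V → ℕ) (S : Set V) : Prop :=
  ∀ u ∈ S, ∀ v ∈ S, τ u = τ v

/-- `τ` is an MVD-coloring: every pair of distinct nonadjacent vertices is
separated by a monochromatic vertex cut. -/
def IsMVDColoring (G : SimpleGraph V) (τ : V → ℕ) : Prop :=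
  ∀ x y : V, x ≠ y → ¬ G.Adj x y →
    ∃ S : Set V, IsCutBetween G x y S ∧ Monochromatic τ S

/-- The monochromatic vertex-disconnection number: the maximum number of colors
used by an MVD-coloring. -/
noncomputable def mvd (G : SimpleGraph V) : ℕ :=
  sSup {k | ∃ τ : V → ℕ, IsMVDColoring G τ ∧ (Set.range τ).ncard = k}

/-- An `mvd`-coloring: an MVD-coloring attaining `mvd G` colors. -/
def IsOptimalMVDColoring (G : SimpleGraph V) (τ : V → ℕ) : Prop :=
  IsMVDColoring G τ ∧ (Set.range τ).ncard = mvd G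

/-- The subgraph of `G` induced on `S` has no cut vertex. -/
def NoCutVertexOn (G : SimpleGraph V) (S : Set V) : Prop :=
  ∀ v ∈ S, ∀ x ∈ S \ {v}, ∀ y ∈ S \ {v}, ReachableWithin G (S \ {v}) x y

/-- `B` is a block of `G`: a maximal vertex set inducing a connected subgraph
with no cut vertex. -/
def IsBlock (G : SimpleGraph V) (B : Set V) : Prop :=
  ConnectedOn G B ∧ NoCutVertexOn G B ∧
    ∀ C : Set V, B ⊆ C → ConnectedOn G C → NoCutVertexOn G C → C = B

/-- `G` is 2-connected. -/
def TwoConnected (G : SimpleGraph V) : Prop :=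
  3 ≤ Nat.card V ∧ ∀ v : V, ConnectedOn G {u | u ≠ v}

/-- `G` is minimally 2-connected. -/
def MinimallyTwoConnected (G : SimpleGraph V) : Prop :=
  TwoConnected G ∧ ∀ e ∈ G.edgeSet, ¬ TwoConnected (G.deleteEdges {e})

/-!
The blocks of `G` are triangle-free, hence so is `G`. Then the two neighbours of a vertex `u` of a
cycle are non-adjacent, and every cut separating them contains `u` and another vertex of the
cycle. So in an MVD-colouring every vertex of a cycle shares its colour with another vertex of
that cycle: a cycle of length `ℓ` leaves at most `n - ⌈ℓ / 2⌉` colours, and two different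
`4`-cycles, which together span at least five vertices, at most `n - 3`. As every colouring of a
tree is an MVD-colouring, `mvd G = n - 2` forces a cycle, all cycles of length `4`, and only one
cycle. Conversely, if `abcd` is the only cycle, the colouring that is injective except that `c`
and `d` take the colours of `a` and `b` is an MVD-colouring: `{b, d}` separates `a` from `c`,
and a vertex off the cycle is separated from any non-neighbour by the next vertex on a path.
-/

namespace SimpleGraph

variable {G : SimpleGraph V} {u : V}

namespace Walk

lemma IsCycle.card_support_toFinset [DecidableEq V] {c : G.Walk u u} (hc : c.IsCycle) :
    c.support.toFinset.card = c.length := by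
  have hu : u ∈ c.support.tail := end_mem_tail_support hc.not_nil
  rw [← c.cons_tail_support, List.toFinset_cons,
    Finset.insert_eq_of_mem (List.mem_toFinset.2 hu), List.toFinset_card_of_nodup hc.support_nodup,
    List.length_tail, length_support, Nat.add_sub_cancel]

lemma IsCycle.not_adj_snd_penultimate (hG : G.CliqueFree 3) {c : G.Walk u u}
    (hc : c.IsCycle) : ¬ G.Adj c.snd c.penultimate := fun h => by
  classical
  exact hG _ (is3Clique_triple_iff.2
    ⟨c.adj_snd hc.not_nil, (c.adj_penultimate hc.not_nil).symm, h⟩)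

lemma IsCycle.four_le_length (hG : G.CliqueFree 3) {c : G.Walk u u} (hc : c.IsCycle) :
    4 ≤ c.length := by
  by_contra! h
  have h3 : c.length = 3 := by have := hc.three_le_length; omega
  have := c.adj_getVert_succ (i := 1) (by omega)
  exact hc.not_adj_snd_penultimate hG (by rwa [penultimate, h3])

lemma exists_eq_of_length_eq_four (c : G.Walk u u) (h : c.length = 4) :
    ∃ (b c' d : V) (hab : G.Adj u b) (hbc : G.Adj b c') (hcd : G.Adj c' d) (hda : G.Adj d u),
      c = cons hab (cons hbc (cons hcd (cons hda nil))) := by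
  rcases c with _ | ⟨_, _ | ⟨_, _ | ⟨_, _ | ⟨_, _ | ⟨_, _⟩⟩⟩⟩⟩ <;> simp at h
  exact ⟨_, _, _, _, _, _, _, rfl⟩

lemma IsCycle.mem_edges_of_adj_of_length_eq_four (hG : G.CliqueFree 3) {c : G.Walk u u}
    (hc : c.IsCycle) (h4 : c.length = 4) {x y : V} (hx : x ∈ c.support) (hy : y ∈ c.support)
    (hxy : G.Adj x y) : s(x, y) ∈ c.edges := by
  classical
  obtain ⟨b, c', d, hab, hbc, hcd, hda, rfl⟩ := c.exists_eq_of_length_eq_four h4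
  have hac : ¬ G.Adj u c' := fun h => hG _ (is3Clique_triple_iff.2 ⟨hab, h, hbc⟩)
  have hbd : ¬ G.Adj b d := fun h => hG _ (is3Clique_triple_iff.2 ⟨hbc, h, hcd⟩)
  simp only [support_cons, support_nil, List.mem_cons, List.not_mem_nil, or_false] at hx hy
  simp only [edges_cons, edges_nil, List.mem_cons, List.not_mem_nil, or_false, Sym2.eq_swap]
  rcases hx with rfl | rfl | rfl | rfl | rfl <;> rcases hy with rfl | rfl | rfl | rfl | rfl <;>
    simp_all [Sym2.eq_swap, adj_comm]

end Walk

lemma Connected.connected_deleteEdges_of_mem_edges (hG : G.Connected) {c : G.Walk u u}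
    (hc : c.IsCycle) {e : Sym2 V} (he : e ∈ c.edges) : (G.deleteEdges {e}).Connected := by
  induction e using Sym2.ind with
  | _ x y =>
    exact hG.connected_delete_edge_of_not_isBridge fun hb => hb.notMem_edges_of_isCycle hc he

lemma card_edgeSet_deleteEdges_add_one [Finite V] {e : Sym2 V} (he : e ∈ G.edgeSet) :
    Nat.card (G.deleteEdges {e}).edgeSet + 1 = Nat.card G.edgeSet := by
  rw [edgeSet_deleteEdges, Nat.card_coe_set_eq, Nat.card_coe_set_eq]
  exact Set.ncard_sdiff_singleton_add_one he (Set.toFinite _)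

/-- Deleting an edge of `c₁` leaves a tree, which cannot contain `c₂`. -/
lemma Connected.mem_edges_of_isCycle [Finite V] (hG : G.Connected)
    (hcard : Nat.card G.edgeSet = Nat.card V) {v w : V} {c₁ : G.Walk v v} {c₂ : G.Walk w w}
    (hc₁ : c₁.IsCycle) (hc₂ : c₂.IsCycle) {e : Sym2 V} (he : e ∈ c₁.edges) : e ∈ c₂.edges := by
  by_contra he₂
  have htree : (G.deleteEdges {e}).IsTree := by
    rw [isTree_iff_connected_and_card]
    have := card_edgeSet_deleteEdges_add_one (c₁.edges_subset_edgeSet he)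
    exact ⟨hG.connected_deleteEdges_of_mem_edges hc₁ he, by omega⟩
  exact htree.isAcyclic _ (hc₂.toDeleteEdges G {e} fun f hf hfe => he₂ (by rwa [← hfe]))

lemma Connected.exists_isCutBetween_singleton (hG : G.Connected) {x y : V}
    (hx : ∀ ⦃w : V⦄ (c : G.Walk w w), c.IsCycle → x ∉ c.support) (hxy : x ≠ y)
    (hadj : ¬ G.Adj x y) : ∃ u, IsCutBetween G x y {u} := by
  obtain ⟨p, hp⟩ := hG.exists_isPath x y
  cases p with
  | nil => exact absurd rfl hxy
  | @cons _ u _ hxu q =>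
    have hxq : x ∉ q.support := ((Walk.cons_isPath_iff _ _).1 hp).2
    have hbridge : G.IsBridge s(x, u) := (isBridge_iff_forall_cycle_notMem hxu).2
      fun _ c hc he => hx c hc (c.fst_mem_support_of_mem_edges he)
    refine ⟨u, by simpa using hxu.ne, by simpa using fun h : y = u => hadj (h ▸ hxu),
      fun w => ⟨u, ?_, rfl⟩⟩
    by_contra hu
    have := isBridge_iff_forall_walk_mem_edges.1 hbridge (w.append q.reverse)
    rw [Walk.edges_append, List.mem_append, Walk.edges_reverse, List.mem_reverse] at this
    rcases this with h | h
    · exact hu (w.snd_mem_support_of_mem_edges h)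
    · exact hxq (q.fst_mem_support_of_mem_edges h)

lemma Connected.mem_support_of_isCycle [Finite V] (hG : G.Connected)
    (hcard : Nat.card G.edgeSet = Nat.card V) {v w x : V} {c₁ : G.Walk v v} {c₂ : G.Walk w w}
    (hc₁ : c₁.IsCycle) (hc₂ : c₂.IsCycle) (hx : x ∈ c₁.support) : x ∈ c₂.support := by
  obtain ⟨e, he, hxe⟩ := (Walk.mem_support_iff_exists_mem_edges_of_not_nil hc₁.not_nil).1 hx
  exact c₂.mem_support_of_mem_edges (hG.mem_edges_of_isCycle hcard hc₁ hc₂ he) hxe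

end SimpleGraph

section Blocks

variable {G : SimpleGraph V}

lemma reachableWithin_of_isClique {S : Set V} (hS : G.IsClique S) {x y : V} (hx : x ∈ S)
    (hy : y ∈ S) : ReachableWithin G S x y := by
  by_cases hxy : x = y
  · subst hxy
    exact ⟨.nil, by simpa using hx⟩
  · exact ⟨.cons (hS hx hy hxy) .nil, by simp [hx, hy]⟩

lemma exists_isBlock_superset [Finite V] {S : Set V} (hconn : ConnectedOn G S)
    (hcut : NoCutVertexOn G S) : ∃ B, S ⊆ B ∧ IsBlock G B := by
  obtain ⟨B, ⟨hSB, hBconn, hBcut⟩, hmax⟩ := Set.Finite.exists_maximalFor Set.ncard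
    {C | S ⊆ C ∧ ConnectedOn G C ∧ NoCutVertexOn G C} (Set.toFinite _)
    ⟨S, subset_rfl, hconn, hcut⟩
  refine ⟨B, hSB, hBconn, hBcut, fun C hBC hCconn hCcut => ?_⟩
  have hle := hmax ⟨hSB.trans hBC, hCconn, hCcut⟩ (Set.ncard_le_ncard hBC)
  exact (Set.eq_of_subset_of_ncard_le hBC hle).symm

/-- A clique is connected without cut vertices, so it lies inside a block. -/
lemma cliqueFree_of_forall_isBlock [Finite V] {n : ℕ} (hn : 0 < n)
    (h : ∀ B, IsBlock G B → (G.induce B).CliqueFree n) : G.CliqueFree n := by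
  classical
  intro t ht
  have hS : G.IsClique (t : Set V) := ht.isClique
  obtain ⟨B, htB, hB⟩ := exists_isBlock_superset (S := (t : Set V))
    ⟨Finset.coe_nonempty.2 (Finset.card_pos.1 (ht.card_eq ▸ hn)),
      fun x hx y hy => reachableWithin_of_isClique hS hx hy⟩
    fun _ _ x hx y hy => reachableWithin_of_isClique (hS.subset Set.sdiff_subset) hx hy
  apply h B hB (t.subtype (· ∈ B))
  rwa [isNClique_induce_iff, Finset.subtype_map, Finset.filter_true_of_mem fun x hx => htB hx]

end Blocks

section MVD

variable {G : SimpleGraph V} {τ : V → ℕ} {x y u v w : V} {S : Set V}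

lemma IsCutBetween.symm (h : IsCutBetween G x y S) : IsCutBetween G y x S := by
  refine ⟨h.2.1, h.1, fun p => ?_⟩
  simpa using h.2.2 p.reverse

lemma IsCutBetween.mem_of_adj_of_adj (h : IsCutBetween G x y S) (hxu : G.Adj x u)
    (huy : G.Adj u y) : u ∈ S := by
  obtain ⟨v, hv, hvS⟩ := h.2.2 (.cons hxu (.cons huy .nil))
  simp only [Walk.support_cons, Walk.support_nil, List.mem_cons, List.not_mem_nil,
    or_false] at hv
  rcases hv with rfl | rfl | rfl
  exacts [absurd hvS h.1, hvS, absurd hvS h.2.1]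

lemma monochromatic_singleton (τ : V → ℕ) (u : V) : Monochromatic τ {u} := by
  rintro v rfl w rfl
  rfl

lemma monochromatic_pair (h : τ x = τ y) : Monochromatic τ {x, y} := by
  rintro v (rfl | rfl) w (rfl | rfl) <;> simp [h]

lemma isCutBetween_neighborSet (hxy : x ≠ y) (hadj : ¬ G.Adj x y) :
    IsCutBetween G x y (G.neighborSet x) :=
  ⟨by simp, by simpa using hadj, fun p =>
    ⟨p.snd, p.getVert_mem_support 1, p.adj_snd (Walk.not_nil_of_ne hxy)⟩⟩

lemma isMVDColoring_const (G : SimpleGraph V) (k : ℕ) : IsMVDColoring G fun _ => k :=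
  fun _ _ hxy hadj => ⟨_, isCutBetween_neighborSet hxy hadj, fun _ _ _ _ => rfl⟩

lemma mvd_le {m : ℕ} (h : ∀ τ, IsMVDColoring G τ → (Set.range τ).ncard ≤ m) : mvd G ≤ m :=
  csSup_le ⟨_, _, isMVDColoring_const G 0, rfl⟩ fun _ ⟨τ, hτ, hk⟩ => hk ▸ h τ hτ

lemma ncard_range_le_card [Finite V] (τ : V → ℕ) : (Set.range τ).ncard ≤ Nat.card V := by
  rw [← Set.image_univ, ← Set.ncard_univ V]
  exact Set.ncard_image_le

lemma IsMVDColoring.ncard_range_le_mvd [Finite V] (hτ : IsMVDColoring G τ) :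
    (Set.range τ).ncard ≤ mvd G :=
  le_csSup ⟨Nat.card V, fun _ ⟨τ', _, hk⟩ => hk ▸ ncard_range_le_card τ'⟩ ⟨τ, hτ, rfl⟩

lemma isMVDColoring_of_isAcyclic (hG : G.Connected) (hac : G.IsAcyclic) (τ : V → ℕ) :
    IsMVDColoring G τ := fun _ _ hxy hadj =>
  have ⟨u, hu⟩ := hG.exists_isCutBetween_singleton (fun _ c hc _ => hac c hc) hxy hadj
  ⟨{u}, hu, monochromatic_singleton τ u⟩

/-- The vertices of `s` use at most `#s / 2` colours. -/
lemma two_mul_ncard_range_add_card_le [Fintype V] (τ : V → ℕ) (s : Finset V)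
    (h : ∀ u ∈ s, ∃ z ∈ s, z ≠ u ∧ τ z = τ u) :
    2 * (Set.range τ).ncard + s.card ≤ 2 * Fintype.card V := by
  classical
  have hsplit : Finset.univ.image τ ⊆ (Finset.univ \ s).image τ ∪ s.image τ := by
    rw [← Finset.image_union, Finset.sdiff_union_of_subset (Finset.subset_univ s)]
  have hcompl : ((Finset.univ \ s).image τ).card ≤ Fintype.card V - s.card := by
    rw [← Finset.card_univ, ← Finset.card_sdiff_of_subset (Finset.subset_univ s)]
    exact Finset.card_image_le
  have hs : 2 * (s.image τ).card ≤ s.card := by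
    refine Finset.mul_card_image_le_card s 2 fun b hb => ?_
    obtain ⟨u, hu, rfl⟩ := Finset.mem_image.1 hb
    obtain ⟨z, hz, hzu, hτz⟩ := h u hu
    exact Finset.one_lt_card.2 ⟨u, by simp [hu], z, by simp [hz, hτz], hzu.symm⟩
  have hrange : (Set.range τ).ncard = (Finset.univ.image τ).card := by
    rw [← Set.ncard_coe_finset, Finset.coe_image, Finset.coe_univ, Set.image_univ]
  have := (Finset.card_le_card hsplit).trans (Finset.card_union_le _ _)
  have := Finset.card_le_univ s
  omega

lemma IsMVDColoring.exists_twin_of_isCycle (hτ : IsMVDColoring G τ) (hG : G.CliqueFree 3)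
    {c : G.Walk u u} (hc : c.IsCycle) : ∃ z ∈ c.support, z ≠ u ∧ τ z = τ u := by
  classical
  have hnil := hc.not_nil
  obtain ⟨S, hS, hmono⟩ :=
    hτ c.snd c.penultimate hc.snd_ne_penultimate (hc.not_adj_snd_penultimate hG)
  have huS : u ∈ S :=
    hS.mem_of_adj_of_adj (c.adj_snd hnil).symm (c.adj_penultimate hnil).symm
  have hpen : c.penultimate ∈ c.tail.support := by
    have h := c.getVert_mem_support (c.length - 1)
    rw [← c.cons_tail_support, List.mem_cons] at h
    rw [c.support_tail_of_not_nil hnil]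
    exact h.resolve_left (c.adj_penultimate hnil).ne
  have huq : u ∉ (c.tail.takeUntil _ hpen).support :=
    Walk.endpoint_notMem_support_takeUntil hc.isPath_tail hpen (c.adj_penultimate hnil).ne'
  obtain ⟨z, hz, hzS⟩ := hS.2.2 (c.tail.takeUntil _ hpen)
  have hzc : z ∈ c.support := by
    have := c.tail.support_takeUntil_subset_support hpen hz
    rw [c.support_tail_of_not_nil hnil] at this
    exact List.mem_of_mem_tail this
  exact ⟨z, hzc, fun h => huq (h ▸ hz), hmono z hzS u huS⟩

lemma IsMVDColoring.exists_twin_of_mem_support (hτ : IsMVDColoring G τ) (hG : G.CliqueFree 3)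
    {c : G.Walk w w} (hc : c.IsCycle) (hv : v ∈ c.support) :
    ∃ z ∈ c.support, z ≠ v ∧ τ z = τ v := by
  classical
  obtain ⟨z, hz, h⟩ := hτ.exists_twin_of_isCycle hG (hc.rotate hv)
  exact ⟨z, (c.mem_support_rotate_iff v hv).1 hz, h⟩

lemma IsMVDColoring.two_mul_ncard_range_add_length_le [Fintype V] (hτ : IsMVDColoring G τ)
    (hG : G.CliqueFree 3) {c : G.Walk w w} (hc : c.IsCycle) :
    2 * (Set.range τ).ncard + c.length ≤ 2 * Fintype.card V := by
  classical
  rw [← hc.card_support_toFinset]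
  refine two_mul_ncard_range_add_card_le τ _ fun v hv => ?_
  obtain ⟨z, hz, h⟩ := hτ.exists_twin_of_mem_support hG hc (List.mem_toFinset.1 hv)
  exact ⟨z, List.mem_toFinset.2 hz, h⟩

/-- A `4`-cycle has no chord in a triangle-free graph, so the two cycles span at least five
vertices. -/
lemma IsMVDColoring.two_mul_ncard_range_add_five_le [Fintype V] (hτ : IsMVDColoring G τ)
    (hG : G.CliqueFree 3) {c₁ : G.Walk v v} {c₂ : G.Walk w w} (hc₁ : c₁.IsCycle)
    (hc₂ : c₂.IsCycle) (h₁ : c₁.length = 4) (h₂ : c₂.length = 4) {e : Sym2 V}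
    (he₁ : e ∈ c₁.edges) (he₂ : e ∉ c₂.edges) :
    2 * (Set.range τ).ncard + 5 ≤ 2 * Fintype.card V := by
  classical
  set s := c₁.support.toFinset ∪ c₂.support.toFinset
  have htwins : ∀ u ∈ s, ∃ z ∈ s, z ≠ u ∧ τ z = τ u := by
    simp only [s, Finset.mem_union, List.mem_toFinset]
    rintro u (hu | hu)
    · obtain ⟨z, hz, h⟩ := hτ.exists_twin_of_mem_support hG hc₁ hu
      exact ⟨z, .inl hz, h⟩
    · obtain ⟨z, hz, h⟩ := hτ.exists_twin_of_mem_support hG hc₂ hu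
      exact ⟨z, .inr hz, h⟩
  by_contra! hlt
  have hs : s.card ≤ 4 := by
    have := two_mul_ncard_range_add_card_le τ s htwins
    omega
  have hsupp : c₂.support.toFinset ⊆ c₁.support.toFinset := by
    rw [Finset.eq_of_subset_of_card_le (Finset.subset_union_left : _ ⊆ s)
      (by rw [hc₁.card_support_toFinset, h₁]; exact hs)]
    exact Finset.subset_union_right
  have hedges : c₂.edges ⊆ c₁.edges := fun f hf => by
    induction f using Sym2.ind with
    | _ x y =>
      have hsub : ∀ z ∈ c₂.support, z ∈ c₁.support := fun z hz =>
        List.mem_toFinset.1 (hsupp (List.mem_toFinset.2 hz))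
      exact hc₁.mem_edges_of_adj_of_length_eq_four hG h₁
        (hsub x (c₂.fst_mem_support_of_mem_edges hf))
        (hsub y (c₂.snd_mem_support_of_mem_edges hf)) (c₂.adj_of_mem_edges hf)
  have hperm := (List.subperm_of_subset hc₂.edges_nodup hedges).perm_of_length_le
    (by simp [h₁, h₂])
  exact he₂ (hperm.mem_iff.2 he₁)

/-- An `a`–`c` path avoiding `b` and `d` would close a cycle through `b` that misses `d`. -/
lemma isCutBetween_pair {a b c d : V}
    (hd : ∀ ⦃w : V⦄ (p : G.Walk w w), p.IsCycle → d ∈ p.support) (hab : G.Adj a b)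
    (hbc : G.Adj b c) (hac : a ≠ c) (hbd : b ≠ d) (hda : d ≠ a) (hdc : d ≠ c) :
    IsCutBetween G a c {b, d} := by
  classical
  refine ⟨by simp [hab.ne, hda.symm], by simp [hbc.ne', hdc.symm], fun p => ?_⟩
  by_contra! hp
  have hbp : b ∉ p.bypass.support := fun h => hp b (p.support_bypass_subset_support h) (by simp)
  have hcyc : (Walk.cons hab.symm (p.bypass.concat hbc.symm)).IsCycle := by
    refine (Walk.cons_isCycle_iff _ _).2 ⟨p.bypass_isPath.concat hbp _, fun h => ?_⟩
    rw [Walk.edges_concat, List.concat_eq_append, List.mem_append, List.mem_singleton,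
      Sym2.eq_iff] at h
    rcases h with h | ⟨h, -⟩ | ⟨-, h⟩
    · exact hbp (p.bypass.fst_mem_support_of_mem_edges h)
    · exact hbc.ne h
    · exact hac h
  have := hd _ hcyc
  rw [Walk.support_cons, Walk.support_concat, List.mem_cons, List.mem_append,
    List.mem_singleton] at this
  rcases this with h | h | h
  · exact hbd h.symm
  · exact hp d (p.support_bypass_subset_support h) (by simp)
  · exact hbd h.symm

lemma isMVDColoring_of_opposite_eq (hG : G.Connected) {a b c d : V} (hab : G.Adj a b)
    (hbc : G.Adj b c) (hcd : G.Adj c d) (hda : G.Adj d a) (hac : a ≠ c) (hbd : b ≠ d)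
    (hQ : ∀ ⦃w : V⦄ (p : G.Walk w w), p.IsCycle →
      ∀ x, x ∈ p.support ↔ x = a ∨ x = b ∨ x = c ∨ x = d)
    {τ : V → ℕ} (hτc : τ c = τ a) (hτd : τ d = τ b) : IsMVDColoring G τ := by
  have hoff : ∀ x y, ¬(x = a ∨ x = b ∨ x = c ∨ x = d) → x ≠ y → ¬ G.Adj x y →
      ∃ S, IsCutBetween G x y S ∧ Monochromatic τ S := fun x y hx hxy hadj =>
    have ⟨u, hu⟩ := hG.exists_isCutBetween_singleton
      (fun _ p hp hxp => hx ((hQ p hp x).1 hxp)) hxy hadj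
    ⟨{u}, hu, monochromatic_singleton τ u⟩
  have hcutAC : IsCutBetween G a c {b, d} :=
    isCutBetween_pair (fun _ p hp => (hQ p hp d).2 (by simp)) hab hbc hac hbd hda.ne hcd.ne'
  have hcutBD : IsCutBetween G b d {c, a} :=
    isCutBetween_pair (fun _ p hp => (hQ p hp a).2 (by simp)) hbc hcd hbd hac.symm hab.ne
      hda.ne'
  have hmonoBD : Monochromatic τ {b, d} := monochromatic_pair hτd.symm
  have hmonoAC : Monochromatic τ {c, a} := monochromatic_pair hτc
  intro x y hxy hadj
  by_cases hx : x = a ∨ x = b ∨ x = c ∨ x = d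
  · by_cases hy : y = a ∨ y = b ∨ y = c ∨ y = d
    · rcases hx with rfl | rfl | rfl | rfl <;> rcases hy with rfl | rfl | rfl | rfl <;>
        first
        | exact (hxy rfl).elim
        | exact (hadj ‹_›).elim
        | exact (hadj (Adj.symm ‹_›)).elim
        | exact ⟨_, hcutAC, hmonoBD⟩
        | exact ⟨_, hcutAC.symm, hmonoBD⟩
        | exact ⟨_, hcutBD, hmonoAC⟩
        | exact ⟨_, hcutBD.symm, hmonoAC⟩
    · obtain ⟨S, hS, hmono⟩ := hoff y x hy hxy.symm fun h => hadj h.symm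
      exact ⟨S, hS.symm, hmono⟩
  · exact hoff x y hx hxy hadj

lemma card_sub_two_le_mvd [Fintype V] (hG : G.Connected) {a b c d : V} (hab : G.Adj a b)
    (hbc : G.Adj b c) (hcd : G.Adj c d) (hda : G.Adj d a) (hac : a ≠ c) (hbd : b ≠ d)
    (hQ : ∀ ⦃w : V⦄ (p : G.Walk w w), p.IsCycle →
      ∀ x, x ∈ p.support ↔ x = a ∨ x = b ∨ x = c ∨ x = d) :
    Fintype.card V - 2 ≤ mvd G := by
  classical
  obtain ⟨ι, hι⟩ := Countable.exists_injective_nat V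
  set f : V → V := fun v => if v = c then a else if v = d then b else v
  have hrange : Set.range f = {c, d}ᶜ := by
    refine Set.Subset.antisymm ?_ fun v hv => ⟨v, ?_⟩
    · rintro _ ⟨v, rfl⟩
      simp only [f]
      split_ifs <;> simp [*, hda.ne', hbc.ne]
    · simp only [Set.mem_compl_iff, Set.mem_insert_iff, Set.mem_singleton_iff, not_or] at hv
      simp [f, hv.1, hv.2]
  have hτ : IsMVDColoring G (ι ∘ f) :=
    isMVDColoring_of_opposite_eq hG hab hbc hcd hda hac hbd hQ (by simp [f, hac, hda.ne'])
      (by simp [f, hcd.ne', hbc.ne, hbd])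
  calc Fintype.card V - 2 = (Set.range (ι ∘ f)).ncard := by
        rw [Set.range_comp, Set.ncard_image_of_injective _ hι, hrange, Set.ncard_compl,
          Set.ncard_pair hcd.ne, Nat.card_eq_fintype_card]
    _ ≤ mvd G := hτ.ncard_range_le_mvd

lemma two_mul_mvd_add_le {k m : ℕ}
    (h : ∀ τ, IsMVDColoring G τ → 2 * (Set.range τ).ncard + k ≤ m) : 2 * mvd G + k ≤ m := by
  have := h _ (isMVDColoring_const G 0)
  have := mvd_le (G := G) (m := (m - k) / 2) fun τ hτ => by have := h τ hτ; omega
  omega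

lemma card_le_mvd_of_isAcyclic [Finite V] (hG : G.Connected) (hac : G.IsAcyclic) :
    Nat.card V ≤ mvd G := by
  obtain ⟨ι, hι⟩ := Countable.exists_injective_nat V
  rw [← Set.ncard_range_of_injective hι]
  exact (isMVDColoring_of_isAcyclic hG hac ι).ncard_range_le_mvd

theorem card_edgeSet_eq_and_length_eq_four_of_mvd_eq [Fintype V] (hG : G.Connected)
    (hG3 : G.CliqueFree 3) (hmvd : mvd G = Fintype.card V - 2) :
    Nat.card G.edgeSet = Fintype.card V ∧
      ∀ (v : V) (c : G.Walk v v), c.IsCycle → c.length = 4 := by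
  have hn : 0 < Fintype.card V := Fintype.card_pos_iff.2 hG.nonempty
  have hlen : ∀ (v : V) (c : G.Walk v v), c.IsCycle → c.length = 4 := fun v c hc => by
    have := hc.four_le_length hG3
    have := two_mul_mvd_add_le fun τ hτ => hτ.two_mul_ncard_range_add_length_le hG3 hc
    omega
  obtain ⟨v, c, hc⟩ : ∃ (v : V) (c : G.Walk v v), c.IsCycle := by
    by_contra! hac
    have := card_le_mvd_of_isAcyclic hG hac
    rw [Nat.card_eq_fintype_card] at this
    omega
  obtain ⟨e, he⟩ : ∃ e, e ∈ c.edges :=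
    List.exists_mem_of_length_pos (by rw [c.length_edges, hlen v c hc]; omega)
  have hacyc : (G.deleteEdges {e}).IsAcyclic := fun w c' hc' => by
    have hc'G := hc'.mapLe (deleteEdges_le {e})
    have he' : e ∉ (c'.mapLe (deleteEdges_le {e})).edges := fun h => by
      rw [Walk.edges_mapLe_eq_edges] at h
      simpa using c'.edges_subset_edgeSet h
    have := two_mul_mvd_add_le fun τ hτ => hτ.two_mul_ncard_range_add_five_le hG3 hc hc'G
      (hlen _ _ hc) (hlen _ _ hc'G) he he'
    omega
  have htree := isTree_iff_connected_and_card.1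
    ⟨hG.connected_deleteEdges_of_mem_edges hc he, hacyc⟩
  have := card_edgeSet_deleteEdges_add_one (c.edges_subset_edgeSet he)
  rw [Nat.card_eq_fintype_card (α := V)] at htree
  exact ⟨by omega, hlen⟩

theorem mvd_eq_of_card_edgeSet_eq [Fintype V] (hG : G.Connected) (hG3 : G.CliqueFree 3)
    (hcard : Nat.card G.edgeSet = Fintype.card V)
    (hlen : ∀ (v : V) (c : G.Walk v v), c.IsCycle → c.length = 4) :
    mvd G = Fintype.card V - 2 := by
  have hcard' : Nat.card G.edgeSet = Nat.card V := by rw [hcard, Nat.card_eq_fintype_card]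
  obtain ⟨a, c, hc⟩ : ∃ (a : V) (c : G.Walk a a), c.IsCycle := by
    by_contra! hac
    have := (isTree_iff_connected_and_card.1 ⟨hG, hac⟩).2
    omega
  have hupper := two_mul_mvd_add_le fun τ hτ => hτ.two_mul_ncard_range_add_length_le hG3 hc
  rw [hlen a c hc] at hupper
  obtain ⟨b, c', d, hab, hbc, hcd, hda, rfl⟩ := c.exists_eq_of_length_eq_four (hlen a c hc)
  have hnodup := hc.support_nodup
  simp only [Walk.support_cons, Walk.support_nil, List.tail_cons, List.nodup_cons,
    List.mem_cons, List.not_mem_nil, or_false, not_or, List.nodup_nil, and_true] at hnodup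
  obtain ⟨⟨-, hbd, -⟩, ⟨-, hca⟩, -⟩ := hnodup
  have hQ : ∀ ⦃w : V⦄ (p : G.Walk w w), p.IsCycle →
      ∀ x, x ∈ p.support ↔ x = a ∨ x = b ∨ x = c' ∨ x = d := fun w p hp x => by
    have hsupp : x ∈ (Walk.cons hab (.cons hbc (.cons hcd (.cons hda .nil)))).support ↔
        x = a ∨ x = b ∨ x = c' ∨ x = d := by
      simp only [Walk.support_cons, Walk.support_nil, List.mem_cons, List.not_mem_nil, or_false]
      tauto
    rw [← hsupp]
    exact ⟨hG.mem_support_of_isCycle hcard' hp hc, hG.mem_support_of_isCycle hcard' hc hp⟩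
  have hlower := card_sub_two_le_mvd hG hab hbc hcd hda (Ne.symm hca) hbd hQ
  omega

end MVD

/-- For a connected graph whose blocks are all trivial or minimally 2-connected
triangle-free, `mvd(G) = n - 2` iff `G` is unicyclic with its unique cycle `C₄`. -/
theorem stmt13 {V : Type*} [Fintype V] (G : SimpleGraph V) (hG : G.Connected)
    (hB : ∀ C : Set V, IsBlock G C →
      ((G.induce C).CliqueFree 3 ∧
        (C.ncard ≤ 2 ∨ MinimallyTwoConnected (G.induce C)))) :
    mvd G = Fintype.card V - 2 ↔
      (Nat.card G.edgeSet = Fintype.card V ∧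
        ∀ (v : V) (c : G.Walk v v), c.IsCycle → c.length = 4) := by
  have hG3 : G.CliqueFree 3 := cliqueFree_of_forall_isBlock three_pos fun C hC => (hB C hC).1
  exact ⟨card_edgeSet_eq_and_length_eq_four_of_mvd_eq hG hG3,
    fun ⟨hcard, hlen⟩ => mvd_eq_of_card_edgeSet_eq hG hG3 hcard hlen⟩
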